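/- arXiv:2012.08894 — 2 statements merged into one kernel-verified Lean document; each statement's English description precedes it below -/
import Mathlib

section
/- Let f : X → X be a homeomorphism of a compact metric space X satisfying the shadowing property. If f^{-1} is sensitive with sensitivity constant ε > 0, then for each x ∈ X there exists a nonempty compact and perfect set C_x contained in the ε-stable set W^s_ε(x). -/
open Metric

/-- A map `g` is sensitive with sensitivity constant `ε > 0`: for every `x` and every `δ > 0`
there exist `y` with `d(x,y) < δ` and `n ∈ ℕ` with `d(gⁿ(x), gⁿ(y)) > ε`. -/
def SensitiveWith {X : Type*} [MetricSpace X] (g : X → X) (ε : ℝ) : Prop :=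
  ∀ x : X, ∀ δ > (0 : ℝ), ∃ y : X, dist x y < δ ∧ ∃ n : ℕ, dist (g^[n] x) (g^[n] y) > ε

/-- The `n`-th iterate (for `n : ℤ`) of a homeomorphism `f`. -/
def zIter {X : Type*} [TopologicalSpace X] (f : X ≃ₜ X) (n : ℤ) : X → X :=
  fun y => (f.toEquiv ^ n) y

/-- The shadowing property for a homeomorphism `f`: for every `ε > 0` there is `δ > 0`
such that every `δ`-pseudo orbit `(xₙ)_{n ∈ ℤ}` is `ε`-shadowed by some point `y`. -/
def ShadowingProperty {X : Type*} [MetricSpace X] (f : X ≃ₜ X) : Prop :=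
  ∀ ε > (0 : ℝ), ∃ δ > (0 : ℝ), ∀ x : ℤ → X,
    (∀ n : ℤ, dist (f (x n)) (x (n + 1)) < δ) →
    ∃ y : X, ∀ n : ℤ, dist (zIter f n y) (x n) < ε

/-- The `ε`-stable set of `x`:
`W^s_ε(x) = {y : d(fⁿ(y), fⁿ(x)) ≤ ε for every n ∈ ℕ}`. -/
def stableSetE {X : Type*} [MetricSpace X] (f : X ≃ₜ X) (ε : ℝ) (x : X) : Set X :=
  {y : X | ∀ n : ℕ, dist ((⇑f)^[n] y) ((⇑f)^[n] x) ≤ ε}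

section Aux

variable {X : Type*} [MetricSpace X] (f : X ≃ₜ X)

lemma zIter_natCast (n : ℕ) (y : X) : zIter f (n : ℤ) y = (⇑f)^[n] y := by
  simp only [zIter, zpow_natCast]
  induction n generalizing y with
  | zero => simp
  | succ k ih =>
    rw [pow_succ, Equiv.Perm.mul_apply, Function.iterate_succ_apply]
    exact ih (f y)

lemma zIter_neg_natCast (n : ℕ) (y : X) : zIter f (-(n : ℤ)) y = (⇑f.symm)^[n] y := by
  simp only [zIter, zpow_neg, zpow_natCast, ← inv_pow]
  induction n generalizing y with
  | zero => simp
  | succ k ih =>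
    rw [pow_succ, Equiv.Perm.mul_apply, Function.iterate_succ_apply]
    have h1 : (f.toEquiv⁻¹) y = f.symm y := rfl
    rw [h1]; exact ih (f.symm y)

lemma f_zIter (k : ℤ) (y : X) : f (zIter f k y) = zIter f (k+1) y := by
  simp only [zIter]
  rw [add_comm, zpow_add, zpow_one, Equiv.Perm.mul_apply]
  rfl

/-- The key perturbation step: near any point `y` there is a different point `z` whose
forward orbit stays `η`-close to that of `y`. -/
lemma step_lemma (hshad : ShadowingProperty f) {ε : ℝ} (hε : 0 < ε)
    (hsen : SensitiveWith (⇑f.symm) ε) (y : X) {η : ℝ} (hη : 0 < η) :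
    ∃ z : X, z ≠ y ∧ dist z y ≤ η ∧ ∀ n : ℕ, dist ((⇑f)^[n] z) ((⇑f)^[n] y) ≤ η := by
  set ε₁ : ℝ := min (η / 2) (ε / 2) with hε₁def
  have hε₁ : 0 < ε₁ := lt_min (by linarith) (by linarith)
  obtain ⟨δ, hδ, hsh⟩ := hshad ε₁ hε₁
  obtain ⟨δ₂, hδ₂, hcont⟩ : ∃ δ₂ > 0, ∀ w : X, dist w y < δ₂ → dist (f w) (f y) < δ := by
    have := Metric.continuousAt_iff.mp (f.continuous.continuousAt (x := y))
    obtain ⟨d, hd, h⟩ := this δ hδ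
    exact ⟨d, hd, fun w hw => h hw⟩
  set δ'' : ℝ := min δ₂ ε₁ with hδ''def
  have hδ'' : 0 < δ'' := lt_min hδ₂ hε₁
  obtain ⟨w, hwy, n₀, hn₀⟩ := hsen y δ'' hδ''
  set P : ℤ → X := fun k => if k ≤ 0 then zIter f k w else zIter f k y with hP
  have hpseudo : ∀ k : ℤ, dist (f (P k)) (P (k + 1)) < δ := by
    intro k
    rcases lt_trichotomy k 0 with hk | hk | hk
    · have h1 : k ≤ 0 := le_of_lt hk
      have h2 : k + 1 ≤ 0 := hk
      simp only [hP, if_pos h1, if_pos h2, f_zIter, dist_self]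
      exact hδ
    · subst hk
      have h2 : ¬ ((0:ℤ) + 1 ≤ 0) := by norm_num
      simp only [hP, if_pos le_rfl, if_neg h2]
      have e1 : zIter f 0 w = w := by simp [zIter]
      have e2 : zIter f (0+1) y = f y := by
        have := f_zIter f 0 y
        rw [← this]; simp [zIter]
      rw [e1, e2]
      exact hcont w (dist_comm y w ▸ lt_of_lt_of_le hwy (min_le_left _ _))
    · have h1 : ¬ (k ≤ 0) := not_le.mpr hk
      have h2 : ¬ (k + 1 ≤ 0) := by omega
      simp only [hP, if_neg h1, if_neg h2, f_zIter, dist_self]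
      exact hδ
  obtain ⟨z, hz⟩ := hsh P hpseudo
  have hzw : dist z w < ε₁ := by
    have := hz 0
    simpa [hP, zIter] using this
  have hback : ∀ n : ℕ, dist ((⇑f.symm)^[n] z) ((⇑f.symm)^[n] w) < ε₁ := by
    intro n
    have := hz (-(n : ℤ))
    have hn : (-(n:ℤ)) ≤ 0 := by omega
    rw [hP] at this
    simp only [if_pos hn] at this
    rwa [zIter_neg_natCast, zIter_neg_natCast] at this
  have hfwd : ∀ n : ℕ, 1 ≤ n → dist ((⇑f)^[n] z) ((⇑f)^[n] y) < ε₁ := by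
    intro n hn
    have := hz (n : ℤ)
    have h1 : ¬ ((n:ℤ) ≤ 0) := by omega
    rw [hP] at this
    simp only [if_neg h1] at this
    rwa [zIter_natCast, zIter_natCast] at this
  have hε₁ε : ε₁ < ε := lt_of_le_of_lt (min_le_right _ _) (by linarith)
  have hwyε : dist w y < ε₁ := lt_of_lt_of_le (dist_comm y w ▸ hwy) (min_le_right _ _)
  have hzy : dist z y ≤ η := by
    calc dist z y ≤ dist z w + dist w y := dist_triangle _ _ _
      _ ≤ ε₁ + ε₁ := by linarith
      _ ≤ η := by
          have : ε₁ ≤ η / 2 := min_le_left _ _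
          linarith
  refine ⟨z, ?_, hzy, ?_⟩
  · rintro rfl
    exact absurd (hback n₀) (not_lt.mpr (le_of_lt (lt_trans hε₁ε hn₀)))
  · intro n
    cases n with
    | zero => simpa using hzy
    | succ k =>
      have := hfwd (k+1) (by omega)
      have h2 : ε₁ ≤ η / 2 := min_le_left _ _
      linarith

end Aux

/-- Iterated binary scheme used to build a Cantor set. -/
def scheme {X : Type*} (x : X) (ε : ℝ) (T : X × ℝ → Bool → X × ℝ) (σ : ℕ → Bool) : ℕ → X × ℝ
  | 0 => (x, ε)
  | (k+1) => T (scheme x ε T σ k) (σ k)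

lemma scheme_zero {X : Type*} (x : X) (ε : ℝ) (T : X × ℝ → Bool → X × ℝ)
    (σ : ℕ → Bool) : scheme x ε T σ 0 = (x, ε) := rfl

lemma scheme_succ {X : Type*} (x : X) (ε : ℝ) (T : X × ℝ → Bool → X × ℝ)
    (σ : ℕ → Bool) (k : ℕ) : scheme x ε T σ (k+1) = T (scheme x ε T σ k) (σ k) := rfl

set_option maxHeartbeats 1600000 in
/-- If a homeomorphism `f` of a compact metric space has the shadowing property and `f⁻¹` is
sensitive with sensitivity constant `ε > 0`, then for each `x` there is a nonempty compact
and perfect set contained in `W^s_ε(x)`. -/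
theorem inv_sensitive_shadowing_stable_perfect {X : Type*} [MetricSpace X] [CompactSpace X]
    (f : X ≃ₜ X) (hshad : ShadowingProperty f) (ε : ℝ) (hε : 0 < ε)
    (hsen : SensitiveWith (⇑f.symm) ε) :
    ∀ x : X, ∃ C : Set X, C.Nonempty ∧ IsCompact C ∧ Perfect C ∧ C ⊆ stableSetE f ε x := by
  intro x
  have key : ∀ y : X, ∀ η : ℝ, 0 < η →
      ∃ z : X, z ≠ y ∧ dist z y ≤ η ∧ ∀ n : ℕ, dist ((⇑f)^[n] z) ((⇑f)^[n] y) ≤ η :=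
    fun y η hη => step_lemma f hshad hε hsen y hη
  choose! Z h1 h2 h3 using key
  set T : X × ℝ → Bool → X × ℝ := fun p b =>
    (if b then Z p.1 (p.2 / 2) else p.1,
      min (p.2 / 2) (dist (Z p.1 (p.2 / 2)) p.1 / 5)) with hT
  set u : (ℕ → Bool) → ℕ → X := fun σ k => (scheme x ε T σ k).1 with hu
  set β : (ℕ → Bool) → ℕ → ℝ := fun σ k => (scheme x ε T σ k).2 with hβ
  have hTsnd' : ∀ (q : X × ℝ) (b : Bool),
      (T q b).2 = min (q.2 / 2) (dist (Z q.1 (q.2 / 2)) q.1 / 5) := by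
    intro q b; rw [hT]
  have hTtrue' : ∀ q : X × ℝ, (T q true).1 = Z q.1 (q.2 / 2) := by
    intro q; simp [hT]
  have hTfalse' : ∀ q : X × ℝ, (T q false).1 = q.1 := by
    intro q; simp [hT]
  -- positivity of the budgets
  have hpos : ∀ σ k, 0 < β σ k := by
    intro σ k
    induction k with
    | zero => exact hε
    | succ k ih =>
      have hne := h1 (u σ k) (β σ k / 2) (by linarith)
      have : 0 < dist (Z (u σ k) (β σ k / 2)) (u σ k) := dist_pos.mpr hne
      rw [hβ]
      simp only [scheme_succ, hTsnd']
      exact lt_min (by linarith) (by linarith)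
  -- budget decay
  have hβsucc : ∀ σ k, β σ (k+1) ≤ β σ k / 2 := by
    intro σ k
    conv_lhs => rw [hβ]
    simp only [scheme_succ, hTsnd']
    exact min_le_left _ _
  -- one-step closeness along all forward iterates
  have hclose : ∀ σ k n, dist ((⇑f)^[n] (u σ (k+1))) ((⇑f)^[n] (u σ k)) ≤ β σ k / 2 := by
    intro σ k n
    have hβ2 : 0 < β σ k / 2 := by have := hpos σ k; linarith
    have hue : u σ (k+1) = (T (scheme x ε T σ k) (σ k)).1 := rfl
    rw [hue]
    cases hb : σ k with
    | false => rw [hTfalse']; simp [hu, le_of_lt hβ2]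
    | true => rw [hTtrue']; exact h3 (u σ k) (β σ k / 2) hβ2 n
  -- telescoping
  have htele : ∀ σ (k m : ℕ), k ≤ m → ∀ n,
      dist ((⇑f)^[n] (u σ m)) ((⇑f)^[n] (u σ k)) ≤ β σ k - β σ m := by
    intro σ k m hkm
    induction m, hkm using Nat.le_induction with
    | base => intro n; simp
    | succ m hkm ih =>
      intro n
      calc dist ((⇑f)^[n] (u σ (m+1))) ((⇑f)^[n] (u σ k))
          ≤ dist ((⇑f)^[n] (u σ (m+1))) ((⇑f)^[n] (u σ m))
            + dist ((⇑f)^[n] (u σ m)) ((⇑f)^[n] (u σ k)) := dist_triangle _ _ _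
        _ ≤ β σ m / 2 + (β σ k - β σ m) := add_le_add (hclose σ m n) (ih n)
        _ ≤ β σ k - β σ (m+1) := by have := hβsucc σ m; linarith
  -- locality
  have hloc : ∀ (k : ℕ) (σ τ : ℕ → Bool), (∀ i, i < k → σ i = τ i) →
      scheme x ε T σ k = scheme x ε T τ k := by
    intro k
    induction k with
    | zero => intro σ τ _; rfl
    | succ k ih =>
      intro σ τ h
      show T (scheme x ε T σ k) (σ k) = T (scheme x ε T τ k) (τ k)
      rw [ih σ τ (fun i hi => h i (Nat.lt_succ_of_lt hi)), h k (Nat.lt_succ_self k)]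
  -- separation at a split
  have hsep : ∀ (σ τ : ℕ → Bool) (k : ℕ), scheme x ε T σ k = scheme x ε T τ k →
      σ k ≠ τ k → 2 * (β σ (k+1) + β τ (k+1)) < dist (u σ (k+1)) (u τ (k+1)) := by
    intro σ τ k heq hne
    have hq2 : 0 < (scheme x ε T σ k).2 := hpos σ k
    have hrpos : 0 < dist (Z (scheme x ε T σ k).1 ((scheme x ε T σ k).2 / 2))
        (scheme x ε T σ k).1 := dist_pos.mpr (h1 _ _ (by linarith))
    have hβσ : β σ (k+1) ≤ dist (Z (scheme x ε T σ k).1 ((scheme x ε T σ k).2 / 2))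
        (scheme x ε T σ k).1 / 5 := by
      rw [hβ]; simp only [scheme_succ, hTsnd']
      exact min_le_right _ _
    have hβτ : β τ (k+1) ≤ dist (Z (scheme x ε T σ k).1 ((scheme x ε T σ k).2 / 2))
        (scheme x ε T σ k).1 / 5 := by
      rw [hβ]; simp only [scheme_succ, ← heq, hTsnd']
      exact min_le_right _ _
    have hdist : dist (u σ (k+1)) (u τ (k+1))
        = dist (Z (scheme x ε T σ k).1 ((scheme x ε T σ k).2 / 2)) (scheme x ε T σ k).1 := by
      rw [hu]
      simp only [scheme_succ, ← heq]
      cases hσk : σ k <;> cases hτk : τ k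
      · rw [hσk, hτk] at hne; exact absurd rfl hne
      · simp [hT, dist_comm]
      · simp [hT]
      · rw [hσk, hτk] at hne; exact absurd rfl hne
    rw [hdist]
    linarith
  -- geometric decay
  have hβgeo : ∀ σ k, β σ k ≤ ε / 2^k := by
    intro σ k
    induction k with
    | zero => simp [hβ, scheme]
    | succ k ih =>
      have := hβsucc σ k
      have h2 : (0:ℝ) < 2^k := by positivity
      calc β σ (k+1) ≤ β σ k / 2 := this
        _ ≤ (ε / 2^k) / 2 := by linarith
        _ = ε / 2^(k+1) := by rw [pow_succ]; ring
  -- Cauchy and limits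
  have hcauchy : ∀ σ, CauchySeq (fun k => u σ k) := by
    intro σ
    apply cauchySeq_of_le_geometric (1/2) ε (by norm_num)
    intro k
    have h0 := hclose σ k 0
    simp only [Function.iterate_zero, id_eq] at h0
    have h2 : (0:ℝ) < 2^k := by positivity
    have : β σ k / 2 ≤ ε * (1/2)^k := by
      have := hβgeo σ k
      have he : ε * (1/2)^k = ε / 2^k := by
        rw [one_div, inv_pow]; ring
      rw [he]
      linarith [hpos σ k]
    calc dist (u σ k) (u σ (k+1)) = dist (u σ (k+1)) (u σ k) := dist_comm _ _
      _ ≤ β σ k / 2 := h0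
      _ ≤ ε * (1/2)^k := this
  have hconv : ∀ σ, ∃ l, Filter.Tendsto (fun k => u σ k) Filter.atTop (nhds l) :=
    fun σ => cauchySeq_tendsto_of_complete (hcauchy σ)
  choose p hp using hconv
  -- the limit stays within budget of every node
  have hL1 : ∀ σ (k : ℕ) (n : ℕ), dist ((⇑f)^[n] (p σ)) ((⇑f)^[n] (u σ k)) ≤ β σ k := by
    intro σ k n
    have hiter : Continuous ((⇑f)^[n]) := f.continuous.iterate n
    have htend : Filter.Tendsto (fun m => (⇑f)^[n] (u σ m)) Filter.atTop
        (nhds ((⇑f)^[n] (p σ))) := (hiter.tendsto (p σ)).comp (hp σ)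
    have hd : Filter.Tendsto (fun m => dist ((⇑f)^[n] (u σ m)) ((⇑f)^[n] (u σ k)))
        Filter.atTop (nhds (dist ((⇑f)^[n] (p σ)) ((⇑f)^[n] (u σ k)))) :=
      htend.dist tendsto_const_nhds
    apply le_of_tendsto hd
    filter_upwards [Filter.eventually_ge_atTop k] with m hm
    have := htele σ k m hm n
    have := hpos σ m
    linarith
  -- limits lie in the stable set
  have hstable : ∀ σ, p σ ∈ stableSetE f ε x := by
    intro σ n
    have := hL1 σ 0 n
    simpa [hu, hβ, scheme] using this
  -- injectivity
  have hinj : ∀ σ τ, σ ≠ τ → p σ ≠ p τ := by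
    intro σ τ hστ hpe
    have hex : ∃ k, σ k ≠ τ k := by
      by_contra h
      push_neg at h
      exact hστ (funext h)
    set k := Nat.find hex with hk
    have hkspec : σ k ≠ τ k := Nat.find_spec hex
    have hmin : ∀ i, i < k → σ i = τ i := fun i hi => not_not.mp (Nat.find_min hex hi)
    have heq := hloc k σ τ hmin
    have hs := hsep σ τ k heq hkspec
    have d1 := hL1 σ (k+1) 0
    have d2 := hL1 τ (k+1) 0
    simp only [Function.iterate_zero, id_eq] at d1 d2
    have : dist (u σ (k+1)) (u τ (k+1)) ≤ β σ (k+1) + β τ (k+1) := by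
      calc dist (u σ (k+1)) (u τ (k+1))
          ≤ dist (u σ (k+1)) (p σ) + dist (p σ) (u τ (k+1)) := dist_triangle _ _ _
        _ = dist (p σ) (u σ (k+1)) + dist (p τ) (u τ (k+1)) := by rw [dist_comm, hpe]
        _ ≤ β σ (k+1) + β τ (k+1) := add_le_add d1 d2
    have := hpos σ (k+1)
    have := hpos τ (k+1)
    linarith
  -- flipping a far coordinate gives nearby distinct points
  have hflip : ∀ σ (k : ℕ), ∃ τ : ℕ → Bool,
      p τ ≠ p σ ∧ dist (p τ) (p σ) ≤ 2 * (ε / 2^k) := by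
    intro σ k
    set τ := Function.update σ k (!(σ k)) with hτ
    have hτk : τ k = !(σ k) := Function.update_self k _ σ
    have hτne : τ ≠ σ := by
      intro h
      have : σ k = !(σ k) := by rw [← hτk, h]
      exact (Bool.not_ne_self (σ k)) this.symm
    have hagree : ∀ i, i < k → τ i = σ i := by
      intro i hi
      exact Function.update_of_ne (Nat.ne_of_lt hi) _ _
    have heq := hloc k τ σ hagree
    have huk : u τ k = u σ k := by rw [hu]; exact congrArg Prod.fst heq
    have hβk : β τ k = β σ k := by rw [hβ]; exact congrArg Prod.snd heq
    refine ⟨τ, hinj τ σ hτne, ?_⟩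
    have d1 := hL1 τ k 0
    have d2 := hL1 σ k 0
    simp only [Function.iterate_zero, id_eq] at d1 d2
    calc dist (p τ) (p σ) ≤ dist (p τ) (u τ k) + dist (u τ k) (p σ) := dist_triangle _ _ _
      _ = dist (p τ) (u τ k) + dist (p σ) (u σ k) := by rw [huk, dist_comm (u σ k) (p σ)]
      _ ≤ β τ k + β σ k := add_le_add d1 d2
      _ ≤ 2 * (ε / 2^k) := by
          have := hβgeo σ k
          rw [hβk]
          linarith
  -- the perfect set
  refine ⟨closure (Set.range p), ?_, ?_, ?_, ?_⟩
  · exact ⟨p (fun _ => false), subset_closure (Set.mem_range_self _)⟩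
  · exact isClosed_closure.isCompact
  · constructor
    · exact isClosed_closure
    · intro c hc
      rw [accPt_iff_nhds]
      intro U hU
      obtain ⟨r, hr, hball⟩ := Metric.mem_nhds_iff.mp hU
      -- find a point of range p within r/2 of c
      obtain ⟨q, hqmem, hq⟩ := Metric.mem_closure_iff.mp hc (r/2) (by linarith)
      by_cases hqc : q = c
      · -- c itself is in the range; flip far coordinate
        obtain ⟨σ, hσ⟩ := hqmem
        have hcσ : c = p σ := by rw [hσ, hqc]
        obtain ⟨k, hk⟩ : ∃ k : ℕ, 2 * (ε / 2^k) < r := by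
          obtain ⟨k, hk⟩ := exists_pow_lt_of_lt_one (show (0:ℝ) < r / (2*ε) by positivity)
            (by norm_num : (1:ℝ)/2 < 1)
          refine ⟨k, ?_⟩
          have h2k : (0:ℝ) < 2^k := by positivity
          rw [one_div, inv_pow] at hk
          calc 2 * (ε / 2^k) = 2 * ε * (2^k)⁻¹ := by ring
            _ < 2 * ε * (r / (2*ε)) := by
                apply mul_lt_mul_of_pos_left hk (by positivity)
            _ = r := by field_simp
        obtain ⟨τ, hτne, hτd⟩ := hflip σ k
        refine ⟨p τ, ⟨?_, subset_closure (Set.mem_range_self _)⟩, ?_⟩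
        · apply hball
          rw [mem_ball, hcσ]
          exact lt_of_le_of_lt hτd hk
        · rw [hcσ]; exact hτne
      · refine ⟨q, ⟨?_, subset_closure hqmem⟩, hqc⟩
        apply hball
        rw [mem_ball, dist_comm]
        exact lt_trans hq (by linarith)
  · -- contained in the stable set
    have hWclosed : IsClosed (stableSetE f ε x) := by
      have heq : stableSetE f ε x
          = ⋂ n : ℕ, {y : X | dist ((⇑f)^[n] y) ((⇑f)^[n] x) ≤ ε} := by
        ext y
        simp [stableSetE, Set.mem_iInter]
      rw [heq]
      exact isClosed_iInter fun n =>
        isClosed_le ((f.continuous.iterate n).dist continuous_const) continuous_const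
    apply closure_minimal _ hWclosed
    rintro _ ⟨σ, rfl⟩
    exact hstable σ
end

section
/- Let X be a compact connected metric space with more than one point, and let f : X → X be a positively cw-expansive homeomorphism. Then f is sensitive. -/
open Metric

/-- A map `g` is sensitive if it is sensitive with some sensitivity constant `ε > 0`. -/
def Sensitive {X : Type*} [MetricSpace X] (g : X → X) : Prop :=
  ∃ ε > (0 : ℝ), SensitiveWith g ε

/-- `f` is positively cw-expansive: there is `c > 0` such that for every non-trivial
continuum `C` (compact, connected, with more than one point) there is `n ∈ ℕ` with
`diam(fⁿ(C)) > c`. -/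
def PosCWExpansive {X : Type*} [MetricSpace X] (f : X → X) : Prop :=
  ∃ c > (0 : ℝ), ∀ C : Set X, IsCompact C → IsConnected C → C.Nontrivial →
    ∃ n : ℕ, Metric.diam (f^[n] '' C) > c

/-- Boundary bumping: in a compact connected metric space, if `K` is a proper closed subset
and `x ∈ K`, then the connected component of `x` in `K` meets the frontier of `K`. -/
theorem bump_aux {X : Type*} [MetricSpace X] [CompactSpace X] [ConnectedSpace X]
    {K : Set X} (hK : IsClosed K) (hKne : K ≠ Set.univ) {x : X} (hx : x ∈ K) :
    (connectedComponentIn K x ∩ frontier K).Nonempty := by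
  by_contra hcon
  rw [Set.not_nonempty_iff_eq_empty] at hcon
  haveI : CompactSpace K := isCompact_iff_compactSpace.mp hK.isCompact
  set x' : K := ⟨x, hx⟩ with hx'
  -- The preimage of the frontier in the subtype
  set F : Set K := (Subtype.val) ⁻¹' (frontier K) with hF
  have hFclosed : IsClosed F := isClosed_frontier.preimage continuous_subtype_val
  have hFcompact : IsCompact F := hFclosed.isCompact
  have hdisj : F ∩ ⋂ s : { s : Set K // IsClopen s ∧ x' ∈ s }, (s : Set K) = ∅ := by
    rw [← connectedComponent_eq_iInter_isClopen x']
    rw [Set.eq_empty_iff_forall_notMem]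
    rintro z ⟨hzF, hzC⟩
    have : (z : X) ∈ connectedComponentIn K x ∩ frontier K := by
      constructor
      · rw [connectedComponentIn_eq_image hx]
        exact ⟨z, hzC, rfl⟩
      · exact hzF
    rw [hcon] at this
    exact this
  obtain ⟨u, hu⟩ := hFcompact.elim_finite_subfamily_closed _
    (fun s : { s : Set K // IsClopen s ∧ x' ∈ s } => s.2.1.1) hdisj
  set U : Set K := ⋂ i ∈ u, (i : Set K) with hU
  have hUclopen : IsClopen U := isClopen_biInter_finset (fun i _ => i.2.1)
  have hxU : x' ∈ U := Set.mem_biInter (fun i _ => i.2.2)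
  have hUF : U ∩ F = ∅ := by
    rw [Set.eq_empty_iff_forall_notMem]
    rintro z ⟨hzU, hzF⟩
    have : z ∈ F ∩ ⋂ i ∈ u, (i : Set K) := ⟨hzF, hzU⟩
    rw [hu] at this
    exact this
  -- push to X
  set V : Set X := Subtype.val '' U with hV
  have hVsub : V ⊆ K := by
    rintro _ ⟨z, _, rfl⟩; exact z.2
  have hVfr : V ∩ frontier K = ∅ := by
    rw [Set.eq_empty_iff_forall_notMem]
    rintro _ ⟨⟨z, hzU, rfl⟩, hfr⟩
    have : z ∈ U ∩ F := ⟨hzU, hfr⟩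
    rw [hUF] at this
    exact this
  have hVint : V ⊆ interior K := by
    intro v hv
    have hvK : v ∈ K := hVsub hv
    by_contra hvi
    have : v ∈ V ∩ frontier K := ⟨hv, by rw [hK.frontier_eq]; exact ⟨hvK, hvi⟩⟩
    rw [hVfr] at this
    exact this
  have hVclosed : IsClosed V :=
    (hUclopen.1.isCompact.image continuous_subtype_val).isClosed
  have hVopen : IsOpen V := by
    obtain ⟨O, hO, hOU⟩ := isOpen_induced_iff.mp hUclopen.2
    have hVOK : V = K ∩ O := by
      rw [hV, ← hOU, Subtype.image_preimage_coe]
    have : V = interior K ∩ O := by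
      apply Set.Subset.antisymm
      · intro v hv
        exact ⟨hVint hv, (hVOK ▸ hv).2⟩
      · intro v hv
        rw [hVOK]
        exact ⟨interior_subset hv.1, hv.2⟩
    rw [this]
    exact isOpen_interior.inter hO
  have hVuniv : V = Set.univ := IsClopen.eq_univ ⟨hVclosed, hVopen⟩ ⟨x, ⟨x', hxU, rfl⟩⟩
  exact hKne (Set.eq_univ_of_univ_subset (hVuniv ▸ hVsub))

/-- A positively cw-expansive homeomorphism of a compact connected metric space with more
than one point is sensitive. -/
theorem posCWExpansive_sensitive {X : Type*} [MetricSpace X] [CompactSpace X]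
    [ConnectedSpace X] [Nontrivial X] (f : X ≃ₜ X) (hcw : PosCWExpansive (⇑f)) :
    Sensitive (⇑f) := by
  obtain ⟨c, hc, hexp⟩ := hcw
  refine ⟨c / 2, by linarith, ?_⟩
  intro x δ hδ
  set K : Set X := closedBall x (δ / 2) with hKdef
  have hxK : x ∈ K := mem_closedBall_self (by linarith)
  have hKclosed : IsClosed K := isClosed_closedBall
  set C : Set X := connectedComponentIn K x with hCdef
  have hCsub : C ⊆ K := connectedComponentIn_subset K x
  have hCconn : IsConnected C := isConnected_connectedComponentIn_iff.mpr hxK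
  have hCcompact : IsCompact C := by
    rw [hCdef, connectedComponentIn_eq_image hxK]
    haveI : CompactSpace K := isCompact_iff_compactSpace.mp hKclosed.isCompact
    exact (isClosed_connectedComponent.isCompact).image continuous_subtype_val
  have hxC : x ∈ C := mem_connectedComponentIn hxK
  have hCnt : C.Nontrivial := by
    by_cases hKu : K = Set.univ
    · have : C = Set.univ := by
        rw [hCdef, hKu, connectedComponentIn_univ]
        exact (isPreconnected_univ.connectedComponentIn (Set.mem_univ x)).symm ▸
          PreconnectedSpace.connectedComponent_eq_univ x
      rw [this]
      exact Set.nontrivial_univ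
    · obtain ⟨z, hzC, hzfr⟩ := bump_aux hKclosed hKu hxK
      refine ⟨z, hzC, x, hxC, ?_⟩
      intro h
      rw [h] at hzfr
      have : x ∈ interior K := by
        apply mem_interior.mpr
        exact ⟨ball x (δ / 2), ball_subset_closedBall, isOpen_ball,
          mem_ball_self (by linarith)⟩
      rw [hKclosed.frontier_eq] at hzfr
      exact hzfr.2 this
  obtain ⟨n, hn⟩ := hexp C hCcompact hCconn hCnt
  -- extract two far points
  have : ¬ ∀ a ∈ (⇑f)^[n] '' C, ∀ b ∈ (⇑f)^[n] '' C, dist a b ≤ c := by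
    intro h
    exact absurd (diam_le_of_forall_dist_le (le_of_lt hc) h) (not_le.mpr hn)
  push_neg at this
  obtain ⟨a, ⟨ya, hya, rfl⟩, b, ⟨yb, hyb, rfl⟩, hab⟩ := this
  have htri : c < dist ((⇑f)^[n] ya) ((⇑f)^[n] x) + dist ((⇑f)^[n] x) ((⇑f)^[n] yb) :=
    lt_of_lt_of_le hab (dist_triangle _ _ _)
  have hya' : dist x ya < δ := by
    have := mem_closedBall.mp (hCsub hya); rw [dist_comm]; linarith
  have hyb' : dist x yb < δ := by
    have := mem_closedBall.mp (hCsub hyb); rw [dist_comm]; linarith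
  rcases lt_or_ge (c / 2) (dist ((⇑f)^[n] x) ((⇑f)^[n] ya)) with h1 | h1
  · exact ⟨ya, hya', n, h1⟩
  · refine ⟨yb, hyb', n, ?_⟩
    rw [dist_comm] at h1
    linarith
end
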